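/- arXiv:2101.04208 — 2 statements merged into one kernel-verified Lean document; each statement's English description precedes it below -/
import Mathlib

section
/- Let n ∈ ℕ, ε > 1, γ > 0, p ∈ [1/2,1), q = 1−p, and let X be a random variable with P(X = √(q/p)) = p and P(X = −√(p/q)) = q. Define L = n^{−1/2}·sup_{0<z<ε√n} ( max{z,√n}/z )·( γ·|E[X³·1_{|X|<z}]| + z·E[X²·1_{|X|≥z}] ). If p = 1/2 then L = 1. If p > 1/2 then: L = max{ 1, γ·q + p, γ·q^{3/2}/√(np) + p·ε }, if n·ε² ≤ p/q; L = max{ 1, γ·q + p, (γ·q² + p²)/√(n·p·q), γ·(p−q)/√(n·p·q) }, if n ≤ p/q < n·ε²; and L = max{ 1, γ·q + p, γ·(p−q)/p }, if n > p/q. -/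
open MeasureTheory Real Set

/-! For the two-point law the truncated moments are step functions of `z`, jumping only at
`a = √(q/p) ≤ 1` and `b = √(p/q) ≥ 1`. On each of `(0, a]`, `(a, b]`, `(b, ∞)` the integrand is
therefore `z ↦ max z √n / z * (α + z * β)` with constants `α, β ≥ 0`; such a function decreases
on `(0, √n]` and increases on `[√n, ∞)`, so its supremum over an interval is approached at the
endpoints. Comparing `ε √n` with `b`, and `b` with `√n`, leaves a few candidate values, whose
maximum is the formula of each regime. -/

/-- Truncated third moment `E[X³·1_{|X|<z}]`. -/
noncomputable def mu3 {Ω : Type*} [MeasurableSpace Ω] (μ : Measure Ω) (X : Ω → ℝ) (z : ℝ) : ℝ :=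
  ∫ ω, (if |X ω| < z then (X ω) ^ 3 else 0) ∂μ

/-- Truncated second moment `E[X²·1_{|X|≥z}]`. -/
noncomputable def sig2 {Ω : Type*} [MeasurableSpace Ω] (μ : Measure Ω) (X : Ω → ℝ) (z : ℝ) : ℝ :=
  ∫ ω, (if z ≤ |X ω| then (X ω) ^ 2 else 0) ∂μ

section TwoPoint

variable {Ω : Type*} [MeasurableSpace Ω] {μ : Measure Ω} [IsProbabilityMeasure μ] {X : Ω → ℝ}
  {u v p q : ℝ}

theorem integral_comp_of_two_point (hX : Measurable X) (huv : u ≠ v) (hp : 0 ≤ p) (hq : 0 ≤ q)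
    (hpq : p + q = 1) (hu : μ {ω | X ω = u} = ENNReal.ofReal p)
    (hv : μ {ω | X ω = v} = ENNReal.ofReal q) (g : ℝ → ℝ) :
    ∫ ω, g (X ω) ∂μ = p * g u + q * g v := by
  set A := X ⁻¹' {u}
  set B := X ⁻¹' {v}
  have hA : MeasurableSet A := hX (measurableSet_singleton u)
  have hB : MeasurableSet B := hX (measurableSet_singleton v)
  have hAB : Disjoint A B := Disjoint.preimage X (disjoint_singleton.mpr huv)
  have hfull : μ (A ∪ B)ᶜ = 0 := by
    rw [measure_compl (hA.union hB) (measure_ne_top μ _), measure_union hAB hB, measure_univ]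
    change 1 - (μ {ω | X ω = u} + μ {ω | X ω = v}) = 0
    rw [hu, hv, ← ENNReal.ofReal_add hp hq, hpq, ENNReal.ofReal_one, tsub_self]
  have hae : (fun ω => g (X ω)) =ᵐ[μ]
      fun ω => A.indicator (fun _ => g u) ω + B.indicator (fun _ => g v) ω := by
    filter_upwards [measure_eq_zero_iff_ae_notMem.mp hfull] with ω hω
    rcases not_not.mp hω with hωA | hωB
    · simp [Set.indicator_of_mem hωA, Set.indicator_of_notMem (hAB.notMem_of_mem_left hωA),
        show X ω = u from hωA]
    · simp [Set.indicator_of_mem hωB, Set.indicator_of_notMem (hAB.notMem_of_mem_right hωB),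
        show X ω = v from hωB]
  rw [integral_congr_ae hae, integral_add ((integrable_const _).indicator hA)
    ((integrable_const _).indicator hB), integral_indicator_const _ hA,
    integral_indicator_const _ hB, measureReal_def, measureReal_def]
  change (μ {ω | X ω = u}).toReal • g u + (μ {ω | X ω = v}).toReal • g v = _
  rw [hu, hv, ENNReal.toReal_ofReal hp, ENNReal.toReal_ofReal hq, smul_eq_mul, smul_eq_mul]

variable {a b : ℝ}

theorem mu3_of_two_point (hX : Measurable X) (ha : 0 < a) (hb : 0 < b) (hp : 0 ≤ p) (hq : 0 ≤ q)
    (hpq : p + q = 1) (hXa : μ {ω | X ω = a} = ENNReal.ofReal p)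
    (hXb : μ {ω | X ω = -b} = ENNReal.ofReal q) (z : ℝ) :
    mu3 μ X z = (if a < z then p * a ^ 3 else 0) - (if b < z then q * b ^ 3 else 0) := by
  rw [mu3, integral_comp_of_two_point hX (by linarith) hp hq hpq hXa hXb
    (fun y => if |y| < z then y ^ 3 else 0)]
  simp only [abs_of_pos ha, abs_neg, abs_of_pos hb]
  split_ifs <;> ring

theorem sig2_of_two_point (hX : Measurable X) (ha : 0 < a) (hb : 0 < b) (hp : 0 ≤ p) (hq : 0 ≤ q)
    (hpq : p + q = 1) (hXa : μ {ω | X ω = a} = ENNReal.ofReal p)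
    (hXb : μ {ω | X ω = -b} = ENNReal.ofReal q) (z : ℝ) :
    sig2 μ X z = (if z ≤ a then p * a ^ 2 else 0) + (if z ≤ b then q * b ^ 2 else 0) := by
  rw [sig2, integral_comp_of_two_point hX (by linarith) hp hq hpq hXa hXb
    (fun y => if z ≤ |y| then y ^ 2 else 0)]
  simp only [abs_of_pos ha, abs_neg, abs_of_pos hb, even_two, Even.neg_pow, mul_ite, mul_zero]

end TwoPoint

noncomputable def esseenProfile (s α β z : ℝ) : ℝ := max z s / z * (α + z * β)

section Profile

variable {s α β c z d : ℝ}

theorem esseenProfile_of_le (hzs : z ≤ s) : esseenProfile s α β z = s / z * (α + z * β) := by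
  rw [esseenProfile, max_eq_right hzs]

theorem esseenProfile_of_ge (hz : 0 < z) (hsz : s ≤ z) : esseenProfile s α β z = α + z * β := by
  rw [esseenProfile, max_eq_left hsz, div_self hz.ne', one_mul]

theorem esseenProfile_antitoneOn (hα : 0 ≤ α) : AntitoneOn (esseenProfile s α β) (Ioc 0 s) := by
  intro c hc z hz hcz
  have split : ∀ w, 0 < w → s / w * (α + w * β) = s * α / w + s * β := fun w hw => by
    field_simp
  have hsα : 0 ≤ s * α := mul_nonneg (hc.1.le.trans hc.2) hα
  rw [esseenProfile_of_le hz.2, esseenProfile_of_le hc.2, split z hz.1, split c hc.1]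
  gcongr
  exact hc.1

theorem esseenProfile_monotoneOn (hs : 0 < s) (hβ : 0 ≤ β) :
    MonotoneOn (esseenProfile s α β) (Ici s) := by
  intro z hz d hd hzd
  rw [esseenProfile_of_ge (hs.trans_le hz) hz, esseenProfile_of_ge (hs.trans_le hd) hd]
  gcongr

theorem esseenProfile_le_max (hs : 0 < s) (hα : 0 ≤ α) (hβ : 0 ≤ β) (hc : 0 < c) (hcz : c ≤ z)
    (hzd : z ≤ d) :
    esseenProfile s α β z ≤ max (esseenProfile s α β c) (esseenProfile s α β d) := by
  rcases le_total z s with hzs | hsz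
  · exact le_max_of_le_left
      (esseenProfile_antitoneOn hα ⟨hc, hcz.trans hzs⟩ ⟨hc.trans_le hcz, hzs⟩ hcz)
  · exact le_max_of_le_right (esseenProfile_monotoneOn hs hβ hsz (hsz.trans hzd) hzd)

theorem esseenProfile_zero_antitoneOn (hs : 0 ≤ s) (hα : 0 ≤ α) :
    AntitoneOn (esseenProfile s α 0) (Ioi 0) := by
  intro c hc z hz hcz
  simp only [esseenProfile, mul_zero, add_zero]
  gcongr ?_ * α
  rw [div_le_div_iff₀ hz hc, max_mul_of_nonneg _ _ hc.le, max_mul_of_nonneg _ _ (le_of_lt hz)]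
  exact max_le_max (by rw [mul_comm]) (mul_le_mul_of_nonneg_left hcz hs)

theorem continuousOn_esseenProfile : ContinuousOn (esseenProfile s α β) (Ioi 0) := by
  unfold esseenProfile
  fun_prop (disch := intro x hx; exact ne_of_gt hx)

end Profile

theorem mem_upperBounds_image_Icc_of_eqOn_Ioo {f g : ℝ → ℝ} {c d U : ℝ} (hcd : c < d)
    (hg : ContinuousOn g (Icc c d)) (hfg : EqOn f g (Ioo c d))
    (hU : U ∈ upperBounds (f '' Ioo c d)) : U ∈ upperBounds (g '' Icc c d) := by
  rintro _ ⟨x, hx, rfl⟩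
  refine ContinuousWithinAt.closure_le (by rwa [closure_Ioo hcd.ne])
    ((hg x hx).mono Ioo_subset_Icc_self) continuousWithinAt_const fun y hy => ?_
  rw [← hfg hy]
  exact hU (mem_image_of_mem f hy)

section PiecewiseProfile

variable {F : ℝ → ℝ} {s a b t α β B : ℝ}

theorem isLUB_image_Ioo_of_le_right (hF₁ : EqOn F (fun _ => s) (Ioc 0 a))
    (hF₂ : EqOn F (esseenProfile s α β) (Ioc a b)) (hs : 0 < s) (hα : 0 ≤ α) (hβ : 0 ≤ β)
    (ha : 0 < a) (hat : a < t) (htb : t ≤ b) :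
    IsLUB (F '' Ioo 0 t) (max s (max (esseenProfile s α β a) (esseenProfile s α β t))) := by
  refine ⟨?_, fun U hU => ?_⟩
  · rintro _ ⟨z, ⟨hz, hzt⟩, rfl⟩
    rcases le_or_gt z a with hza | haz
    · rw [hF₁ ⟨hz, hza⟩]
      exact le_max_left _ _
    · rw [hF₂ ⟨haz, hzt.le.trans htb⟩]
      exact (esseenProfile_le_max hs hα hβ ha haz.le hzt.le).trans (le_max_right _ _)
  · have hP : U ∈ upperBounds (esseenProfile s α β '' Icc a t) :=
      mem_upperBounds_image_Icc_of_eqOn_Ioo hat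
        (continuousOn_esseenProfile.mono fun z hz => ha.trans_le hz.1)
        (hF₂.mono (Ioo_subset_Ioc_self.trans (Ioc_subset_Ioc_right htb)))
        (upperBounds_mono_set (image_mono (Ioo_subset_Ioo_left ha.le)) hU)
    exact max_le (hU ⟨a, ⟨ha, hat⟩, hF₁ ⟨ha, le_rfl⟩⟩)
      (max_le (hP (mem_image_of_mem _ (left_mem_Icc.2 hat.le)))
        (hP (mem_image_of_mem _ (right_mem_Icc.2 hat.le))))

theorem isLUB_image_Ioo_of_lt_right (hF₁ : EqOn F (fun _ => s) (Ioc 0 a))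
    (hF₂ : EqOn F (esseenProfile s α β) (Ioc a b)) (hF₃ : EqOn F (esseenProfile s B 0) (Ioi b))
    (hs : 0 < s) (hα : 0 ≤ α) (hβ : 0 ≤ β) (hB : 0 ≤ B) (ha : 0 < a) (hab : a < b)
    (hbt : b < t) :
    IsLUB (F '' Ioo 0 t) (max (max s (esseenProfile s α β a))
      (max (esseenProfile s α β b) (esseenProfile s B 0 b))) := by
  have hb : 0 < b := ha.trans hab
  refine ⟨?_, fun U hU => ?_⟩
  · rintro _ ⟨z, ⟨hz, hzt⟩, rfl⟩
    rcases le_or_gt z a with hza | haz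
    · rw [hF₁ ⟨hz, hza⟩]
      exact le_max_of_le_left (le_max_left _ _)
    rcases le_or_gt z b with hzb | hbz
    · rw [hF₂ ⟨haz, hzb⟩]
      refine (esseenProfile_le_max hs hα hβ ha haz.le hzb).trans (max_le ?_ ?_)
      · exact le_max_of_le_left (le_max_right _ _)
      · exact le_max_of_le_right (le_max_left _ _)
    · rw [hF₃ hbz]
      exact le_max_of_le_right (le_max_of_le_right
        (esseenProfile_zero_antitoneOn hs.le hB hb hz hbz.le))
  · have hP : U ∈ upperBounds (esseenProfile s α β '' Icc a b) :=
      mem_upperBounds_image_Icc_of_eqOn_Ioo hab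
        (continuousOn_esseenProfile.mono fun z hz => ha.trans_le hz.1)
        (hF₂.mono Ioo_subset_Ioc_self)
        (upperBounds_mono_set (image_mono (Ioo_subset_Ioo ha.le hbt.le)) hU)
    have hQ : U ∈ upperBounds (esseenProfile s B 0 '' Icc b t) :=
      mem_upperBounds_image_Icc_of_eqOn_Ioo hbt
        (continuousOn_esseenProfile.mono fun z hz => hb.trans_le hz.1)
        (hF₃.mono Ioo_subset_Ioi_self)
        (upperBounds_mono_set (image_mono (Ioo_subset_Ioo_left hb.le)) hU)
    exact max_le (max_le (hU ⟨a, ⟨ha, hab.trans hbt⟩, hF₁ ⟨ha, le_rfl⟩⟩)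
        (hP (mem_image_of_mem _ (left_mem_Icc.2 hab.le))))
      (max_le (hP (mem_image_of_mem _ (right_mem_Icc.2 hab.le)))
        (hQ (mem_image_of_mem _ (left_mem_Icc.2 hbt.le))))

end PiecewiseProfile

noncomputable def esseenFraction {Ω : Type*} [MeasurableSpace Ω] (μ : Measure Ω) (X : Ω → ℝ)
    (γ s z : ℝ) : ℝ :=
  esseenProfile s (γ * |mu3 μ X z|) (sig2 μ X z) z

theorem esseenFraction_two_point_eqOn {Ω : Type*} [MeasurableSpace Ω] {μ : Measure Ω}
    [IsProbabilityMeasure μ] {X : Ω → ℝ} {p q s : ℝ} (hX : Measurable X) (hp : 0 < p)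
    (hq : 0 < q) (hqp : q ≤ p) (hpq : p + q = 1)
    (hXp : μ {ω | X ω = √(q / p)} = ENNReal.ofReal p)
    (hXq : μ {ω | X ω = -√(p / q)} = ENNReal.ofReal q) (hs : √(q / p) ≤ s) (γ : ℝ) :
    EqOn (esseenFraction μ X γ s) (fun _ => s) (Ioc 0 √(q / p)) ∧
    EqOn (esseenFraction μ X γ s) (esseenProfile s (γ * (q * √(q / p))) p)
      (Ioc √(q / p) √(p / q)) ∧
    EqOn (esseenFraction μ X γ s) (esseenProfile s (γ * (p * √(p / q) - q * √(q / p))) 0)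
      (Ioi √(p / q)) := by
  set a := √(q / p)
  set b := √(p / q)
  have ha : 0 < a := sqrt_pos.2 (div_pos hq hp)
  have hb : 0 < b := sqrt_pos.2 (div_pos hp hq)
  have hab : a ≤ b := sqrt_le_sqrt ((div_le_one hp).2 hqp |>.trans ((one_le_div hq).2 hqp))
  have hpa : p * a ^ 2 = q := by rw [sq_sqrt (div_pos hq hp).le]; field_simp
  have hqb : q * b ^ 2 = p := by rw [sq_sqrt (div_pos hp hq).le]; field_simp
  have hmu : ∀ z, mu3 μ X z = (if a < z then q * a else 0) - (if b < z then p * b else 0) := by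
    intro z
    have hpa3 : p * a ^ 3 = q * a := by rw [← hpa]; ring
    have hqb3 : q * b ^ 3 = p * b := by rw [← hqb]; ring
    rw [mu3_of_two_point hX ha hb hp.le hq.le hpq hXp hXq, hpa3, hqb3]
  have hsig : ∀ z, sig2 μ X z = (if z ≤ a then q else 0) + (if z ≤ b then p else 0) := by
    intro z
    rw [sig2_of_two_point hX ha hb hp.le hq.le hpq hXp hXq, hpa, hqb]
  refine ⟨fun z ⟨hz, hza⟩ => ?_, fun z ⟨haz, hzb⟩ => ?_, fun z (hbz : b < z) => ?_⟩
  · simp only [esseenFraction, hmu, hsig, if_neg (not_lt.2 hza), if_neg (not_lt.2 (hza.trans hab)),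
      if_pos hza, if_pos (hza.trans hab), sub_self, abs_zero, mul_zero, add_comm q p, hpq]
    rw [esseenProfile_of_le (hza.trans hs), zero_add, mul_one, div_mul_cancel₀ _ hz.ne']
  · simp only [esseenFraction, hmu, hsig, if_pos haz, if_neg (not_lt.2 hzb), if_neg (not_le.2 haz),
      if_pos hzb, sub_zero, zero_add, abs_of_nonneg (mul_nonneg hq.le ha.le)]
  · have hqa : q * a ≤ p * b := mul_le_mul hqp hab ha.le hp.le
    simp only [esseenFraction, hmu, hsig, if_pos hbz, if_pos (hab.trans_lt hbz),
      if_neg (not_le.2 hbz), if_neg (not_le.2 (hab.trans_lt hbz)), add_zero,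
      abs_sub_comm (q * a), abs_of_nonneg (sub_nonneg.2 hqa)]

theorem sqrt_div_lt_one_lt_sqrt_div {p q : ℝ} (hq : 0 < q) (hqp : q < p) :
    √(q / p) < 1 ∧ 1 < √(p / q) := by
  have hp : 0 < p := hq.trans hqp
  constructor
  · rw [sqrt_lt' one_pos, one_pow, div_lt_one hp]
    exact hqp
  · rw [lt_sqrt zero_le_one, one_pow, one_lt_div hq]
    exact hqp

theorem esseenProfile_self_of_le {s γ q p a : ℝ} (ha : 0 < a) (has : a ≤ s) :
    esseenProfile s (γ * (q * a)) p a = s * (γ * q + p) := by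
  rw [esseenProfile_of_le has]
  field_simp

section TwoPointCases

variable {F : ℝ → ℝ} {n p q γ ε : ℝ}

theorem esseen_fraction_of_large_ratio
    (hF₁ : EqOn F (fun _ => √n) (Ioc 0 √(q / p)))
    (hF₂ : EqOn F (esseenProfile √n (γ * (q * √(q / p))) p) (Ioc √(q / p) √(p / q)))
    (hn : 1 ≤ n) (hp : 0 < p) (hq : 0 < q) (hqp : q < p) (hγ : 0 ≤ γ) (hε : 1 < ε)
    (h : n * ε ^ 2 ≤ p / q) :
    (√n)⁻¹ * sSup (F '' Ioo 0 (ε * √n)) =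
      max (max 1 (γ * q + p)) (γ * q ^ (3 / 2 : ℝ) / √(n * p) + p * ε) := by
  obtain ⟨ha1, -⟩ := sqrt_div_lt_one_lt_sqrt_div hq hqp
  have ha : 0 < √(q / p) := sqrt_pos.2 (div_pos hq hp)
  have hs : 1 ≤ √n := one_le_sqrt.2 hn
  have hs0 : 0 < √n := one_pos.trans_le hs
  have hst : √n < ε * √n := lt_mul_left hs0 hε
  have htb : ε * √n ≤ √(p / q) := by
    rw [le_sqrt (by positivity) (by positivity), mul_pow, sq_sqrt (by linarith), mul_comm]
    exact h
  rw [(isLUB_image_Ioo_of_le_right hF₁ hF₂ hs0 (by positivity) hp.le ha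
    (ha1.trans_le (hs.trans hst.le)) htb).csSup_eq ((nonempty_Ioo.2 (by positivity)).image F),
    esseenProfile_self_of_le ha (ha1.le.trans hs), esseenProfile_of_ge (hs0.trans hst) hst.le,
    mul_max_of_nonneg _ _ (inv_nonneg.2 hs0.le), mul_max_of_nonneg _ _ (inv_nonneg.2 hs0.le),
    inv_mul_cancel₀ hs0.ne', inv_mul_cancel_left₀ hs0.ne', max_assoc]
  congr 2
  rw [sqrt_div hq.le, sqrt_mul (by linarith), show (3 / 2 : ℝ) = 1 + 1 / 2 by norm_num,
    rpow_add hq, rpow_one, ← sqrt_eq_rpow]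
  field_simp

theorem esseen_fraction_of_middle_ratio
    (hF₁ : EqOn F (fun _ => √n) (Ioc 0 √(q / p)))
    (hF₂ : EqOn F (esseenProfile √n (γ * (q * √(q / p))) p) (Ioc √(q / p) √(p / q)))
    (hF₃ : EqOn F (esseenProfile √n (γ * (p * √(p / q) - q * √(q / p))) 0) (Ioi √(p / q)))
    (hn : 1 ≤ n) (hp : 0 < p) (hq : 0 < q) (hqp : q < p) (hpq : p + q = 1) (hγ : 0 ≤ γ)
    (hε : 0 < ε) (h₁ : n ≤ p / q) (h₂ : p / q < n * ε ^ 2) :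
    (√n)⁻¹ * sSup (F '' Ioo 0 (ε * √n)) =
      max (max 1 (γ * q + p))
        (max ((γ * q ^ 2 + p ^ 2) / √(n * p * q)) (γ * (p - q) / √(n * p * q))) := by
  obtain ⟨ha1, hb1⟩ := sqrt_div_lt_one_lt_sqrt_div hq hqp
  have ha : 0 < √(q / p) := sqrt_pos.2 (div_pos hq hp)
  have hs : 1 ≤ √n := one_le_sqrt.2 hn
  have hs0 : 0 < √n := one_pos.trans_le hs
  have hsb : √n ≤ √(p / q) := sqrt_le_sqrt h₁
  have hbt : √(p / q) < ε * √n := by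
    rw [sqrt_lt' (by positivity), mul_pow, sq_sqrt (by linarith), mul_comm]
    exact h₂
  have hqa : q * √(q / p) ≤ p * √(p / q) := mul_le_mul hqp.le (ha1.trans hb1).le ha.le hp.le
  rw [(isLUB_image_Ioo_of_lt_right hF₁ hF₂ hF₃ hs0 (by positivity) hp.le
    (mul_nonneg hγ (sub_nonneg.2 hqa)) ha (ha1.trans hb1) hbt).csSup_eq
    ((nonempty_Ioo.2 (by positivity)).image F),
    esseenProfile_self_of_le ha (ha1.le.trans hs), esseenProfile_of_ge (hs0.trans_le hsb) hsb,
    esseenProfile_of_ge (hs0.trans_le hsb) hsb,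
    mul_max_of_nonneg _ _ (inv_nonneg.2 hs0.le), mul_max_of_nonneg _ _ (inv_nonneg.2 hs0.le),
    mul_max_of_nonneg _ _ (inv_nonneg.2 hs0.le),
    inv_mul_cancel₀ hs0.ne', inv_mul_cancel_left₀ hs0.ne']
  obtain ⟨u, hu, rfl⟩ : ∃ u, 0 < u ∧ p = u ^ 2 := ⟨√p, sqrt_pos.2 hp, (sq_sqrt hp.le).symm⟩
  obtain ⟨v, hv, rfl⟩ : ∃ v, 0 < v ∧ q = v ^ 2 := ⟨√q, sqrt_pos.2 hq, (sq_sqrt hq.le).symm⟩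
  congr 2
  · rw [sqrt_div (sq_nonneg _), sqrt_div (sq_nonneg _), sqrt_mul (by positivity),
      sqrt_mul (by positivity), sqrt_sq hu.le, sqrt_sq hv.le]
    field_simp
  · rw [sqrt_div (sq_nonneg _), sqrt_div (sq_nonneg _), sqrt_mul (by positivity),
      sqrt_mul (by positivity), sqrt_sq hu.le, sqrt_sq hv.le]
    field_simp
    linear_combination γ * (u ^ 2 - v ^ 2) * hpq

theorem esseen_fraction_of_small_ratio
    (hF₁ : EqOn F (fun _ => √n) (Ioc 0 √(q / p)))
    (hF₂ : EqOn F (esseenProfile √n (γ * (q * √(q / p))) p) (Ioc √(q / p) √(p / q)))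
    (hF₃ : EqOn F (esseenProfile √n (γ * (p * √(p / q) - q * √(q / p))) 0) (Ioi √(p / q)))
    (hp : 0 < p) (hq : 0 < q) (hqp : q < p) (hpq : p + q = 1) (hγ : 0 ≤ γ) (hε : 1 < ε)
    (h : p / q < n) :
    (√n)⁻¹ * sSup (F '' Ioo 0 (ε * √n)) = max (max 1 (γ * q + p)) (γ * (p - q) / p) := by
  obtain ⟨ha1, hb1⟩ := sqrt_div_lt_one_lt_sqrt_div hq hqp
  have ha : 0 < √(q / p) := sqrt_pos.2 (div_pos hq hp)
  have hbs : √(p / q) < √n := sqrt_lt_sqrt (div_pos hp hq).le h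
  have hs0 : 0 < √n := one_pos.trans (hb1.trans hbs)
  have hbt : √(p / q) < ε * √n := hbs.trans (lt_mul_left hs0 hε)
  have hqa : q * √(q / p) ≤ p * √(p / q) := mul_le_mul hqp.le (ha1.trans hb1).le ha.le hp.le
  have hPb := esseenProfile_antitoneOn (β := p) (mul_nonneg hγ (mul_nonneg hq.le ha.le))
    ⟨ha, (ha1.trans hb1).le.trans hbs.le⟩ ⟨ha.trans (ha1.trans hb1), hbs.le⟩ (ha1.trans hb1).le
  rw [(isLUB_image_Ioo_of_lt_right hF₁ hF₂ hF₃ hs0 (by positivity) hp.le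
    (mul_nonneg hγ (sub_nonneg.2 hqa)) ha (ha1.trans hb1) hbt).csSup_eq
    ((nonempty_Ioo.2 (by positivity)).image F), ← max_assoc,
    max_eq_left (le_max_of_le_right hPb),
    esseenProfile_self_of_le ha (ha1.le.trans (hb1.trans hbs).le), esseenProfile_of_le hbs.le,
    mul_max_of_nonneg _ _ (inv_nonneg.2 hs0.le), mul_max_of_nonneg _ _ (inv_nonneg.2 hs0.le),
    inv_mul_cancel₀ hs0.ne', inv_mul_cancel_left₀ hs0.ne']
  obtain ⟨u, hu, rfl⟩ : ∃ u, 0 < u ∧ p = u ^ 2 := ⟨√p, sqrt_pos.2 hp, (sq_sqrt hp.le).symm⟩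
  obtain ⟨v, hv, rfl⟩ : ∃ v, 0 < v ∧ q = v ^ 2 := ⟨√q, sqrt_pos.2 hq, (sq_sqrt hq.le).symm⟩
  congr 1
  rw [sqrt_div (sq_nonneg _), sqrt_div (sq_nonneg _), sqrt_sq hu.le, sqrt_sq hv.le]
  field_simp
  linear_combination γ * (u ^ 2 - v ^ 2) * hpq

theorem esseen_fraction_of_symmetric
    (hF₁ : EqOn F (fun _ => √n) (Ioc 0 √(q / p)))
    (hF₃ : EqOn F (esseenProfile √n (γ * (p * √(p / q) - q * √(q / p))) 0) (Ioi √(p / q)))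
    (hn : 1 ≤ n) (hp : 0 < p) (hε : 1 < ε) (hqp : q = p) :
    (√n)⁻¹ * sSup (F '' Ioo 0 (ε * √n)) = 1 := by
  subst hqp
  rw [div_self hp.ne', sqrt_one] at hF₁ hF₃
  rw [sub_self, mul_zero] at hF₃
  have hs : 1 ≤ √n := one_le_sqrt.2 hn
  have hs0 : 0 < √n := one_pos.trans_le hs
  have hmax : IsGreatest (F '' Ioo 0 (ε * √n)) √n := by
    refine ⟨⟨1, ⟨one_pos, hs.trans_lt (lt_mul_left hs0 hε)⟩, hF₁ ⟨one_pos, le_rfl⟩⟩, ?_⟩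
    rintro _ ⟨z, ⟨hz, -⟩, rfl⟩
    rcases le_or_gt z 1 with hz1 | hz1
    · rw [hF₁ ⟨hz, hz1⟩]
    · rw [hF₃ hz1]
      simp [esseenProfile, hs0.le]
  rw [hmax.csSup_eq, inv_mul_cancel₀ hs0.ne']

end TwoPointCases

theorem esseen_fraction_g1_two_point
    {Ω : Type*} [MeasurableSpace Ω] (μ : Measure Ω) [IsProbabilityMeasure μ]
    (n : ℕ) (hn : 0 < n) (p : ℝ) (hp : p ∈ Set.Ico (1/2 : ℝ) 1) (q : ℝ) (hq : q = 1 - p)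
    (X : Ω → ℝ) (hX : Measurable X)
    (hXp : μ {ω | X ω = Real.sqrt (q / p)} = ENNReal.ofReal p)
    (hXq : μ {ω | X ω = -Real.sqrt (p / q)} = ENNReal.ofReal q)
    (ε γ : ℝ) (hε : 1 < ε) (hγ : 0 < γ)
    (L : ℝ)
    (hL : L = (Real.sqrt n)⁻¹ *
      sSup ((fun z => max z (Real.sqrt n) / z * (γ * |mu3 μ X z| + z * sig2 μ X z)) ''
        Set.Ioo (0 : ℝ) (ε * Real.sqrt n))) :
    (p = 1/2 → L = 1) ∧
    (1/2 < p →
      ((n : ℝ) * ε ^ 2 ≤ p / q →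
        L = max (max 1 (γ * q + p))
              (γ * q ^ (3/2 : ℝ) / Real.sqrt ((n : ℝ) * p) + p * ε)) ∧
      ((n : ℝ) ≤ p / q → p / q < (n : ℝ) * ε ^ 2 →
        L = max (max 1 (γ * q + p))
              (max ((γ * q ^ 2 + p ^ 2) / Real.sqrt ((n : ℝ) * p * q))
                (γ * (p - q) / Real.sqrt ((n : ℝ) * p * q)))) ∧
      (p / q < (n : ℝ) →
        L = max (max 1 (γ * q + p)) (γ * (p - q) / p))) := by
  obtain ⟨hp₁, hp₂⟩ := hp
  have hp0 : 0 < p := by linarith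
  have hq0 : 0 < q := by linarith
  have hpq : p + q = 1 := by linarith
  have hn1 : (1 : ℝ) ≤ n := Nat.one_le_cast.2 hn
  have has : √(q / p) ≤ √n := sqrt_le_sqrt (((div_le_one hp0).2 (by linarith)).trans hn1)
  obtain ⟨hF₁, hF₂, hF₃⟩ :=
    esseenFraction_two_point_eqOn hX hp0 hq0 (by linarith) hpq hXp hXq has γ
  subst hL
  refine ⟨fun _ => esseen_fraction_of_symmetric hF₁ hF₃ hn1 hp0 hε (by linarith),
    fun hhalf => ⟨fun h => ?_, fun h₁ h₂ => ?_, fun h => ?_⟩⟩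
  · exact esseen_fraction_of_large_ratio hF₁ hF₂ hn1 hp0 hq0 (by linarith) hγ.le hε h
  · exact esseen_fraction_of_middle_ratio hF₁ hF₂ hF₃ hn1 hp0 hq0 (by linarith) hpq hγ.le
      (by linarith) h₁ h₂
  · exact esseen_fraction_of_small_ratio hF₁ hF₂ hF₃ hp0 hq0 (by linarith) hpq hγ.le hε h
end

section
/- Let n ∈ ℕ, ε > 1, γ > 0, p ∈ [1/2,1), q = 1−p, and let X be a random variable with P(X = √(q/p)) = p and P(X = −√(p/q)) = q. Define L = n^{−1/2}·( γ·|E[X³·1_{|X|<ε√n}]| + sup_{0<z<ε√n} (max{z,√n}/√n)·√n·E[X²·1_{|X|≥z}] ), i.e. L = n^{−1/2}·( γ·|E[X³·1_{|X|<ε√n}]| + sup_{0<z<ε√n} max{z,√n}·E[X²·1_{|X|≥z}] ). Then: L = γ·√(q³/(np)) + max{ √(q/(np)), ε·p }, if n ≤ q/p < n·ε² ≤ p/q; L = γ·(p−q)/√(n·p·q) + max{ √(q/(np)), √(p³/(n·q)) }, if n ≤ q/p ≤ p/q < n·ε²; L = γ·√(q³/(np)) + max{ ε·p, 1 }, if q/p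 < n < n·ε² ≤ p/q; L = γ·(p−q)/√(n·p·q) + max{ √(p³/(n·q)), 1 }, if q/p < n ≤ p/q < n·ε²; and L = γ·(p−q)/√(n·p·q) + 1, if n > p/q. -/
/-!
The atoms of `X` are `a = √(q/p) ≤ 1 ≤ √n` and `b = √(p/q) ≥ a`, and `p a² = q`, `q b² = p`.
Hence `μ(ε√n) = q a - p b·[b < ε√n]`, and `σ²(z) = q·[z ≤ a] + p·[z ≤ b]` is a step function, so
`z ↦ max{z, √n} σ²(z)` is `max{z, √n}` up to `a`, `p·max{z, √n}` on `(a, b]` and `0` beyond; its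
supremum over `(0, ε√n)` is `max (max a √n) (p·max (min b (ε√n)) √n)`, attained at `a` or `b` or
approached as `z → ε√n`. Dividing by `√n` and writing `α = √(q/(np))`, `β = √(p/(nq))`,
`L = γ·(if β < ε then pβ - qα else qα) + max (max α 1) (p·max (min β ε) 1)`, and the five cases
are read off from the position of `α` and `β` relative to `1` and `ε`.
-/

open MeasureTheory Real Set

section SqrtIdentities

variable {n p q : ℝ}

theorem mul_sq_sqrt_div (hp : 0 < p) (hq : 0 ≤ q) : p * √(q / p) ^ 2 = q := by
  rw [sq_sqrt (by positivity), mul_div_cancel₀ _ hp.ne']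

theorem mul_sqrt_div_pow_three (hp : 0 < p) (hq : 0 ≤ q) :
    p * √(q / p) ^ 3 = q * √(q / p) := by
  rw [pow_succ, ← mul_assoc, mul_sq_sqrt_div hp hq]

theorem sqrt_div_ne_neg_sqrt_div (hp : 0 < p) (hq : 0 < q) : √(q / p) ≠ -√(p / q) :=
  ((neg_nonpos.2 (sqrt_nonneg _)).trans_lt (sqrt_pos.2 (div_pos hq hp))).ne'

theorem mul_sqrt_div_mul (hq : 0 ≤ q) : q * √(q / (n * p)) = √(q ^ 3 / (n * p)) := by
  rw [show q ^ 3 / (n * p) = q ^ 2 * (q / (n * p)) by ring, sqrt_mul (sq_nonneg q), sqrt_sq hq]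

theorem sqrt_div_mul_eq_div_sqrt (hn : 0 < n) (hp : 0 < p) (hq : 0 < q) :
    √(p / (n * q)) = p / √(n * p * q) := by
  rw [show p / (n * q) = p ^ 2 / (n * p * q) by field_simp, sqrt_div' _ (by positivity),
    sqrt_sq hp.le]

theorem mul_sqrt_div_mul_sub (hn : 0 < n) (hp : 0 < p) (hq : 0 < q) (hpq : p + q = 1) :
    p * √(p / (n * q)) - q * √(q / (n * p)) = (p - q) / √(n * p * q) := by
  rw [sqrt_div_mul_eq_div_sqrt hn hp hq, sqrt_div_mul_eq_div_sqrt hn hq hp,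
    show n * q * p = n * p * q by ring, ← mul_div_assoc, ← mul_div_assoc, ← sub_div,
    show p * p - q * q = (p - q) * (p + q) by ring, hpq, mul_one]

theorem le_sqrt_div_mul_iff {c x y : ℝ} (hc : 0 < c) (hn : 0 < n) :
    c ≤ √(x / (n * y)) ↔ n * c ^ 2 ≤ x / y := by
  rw [le_sqrt' hc, div_mul_eq_div_div_swap, le_div_iff₀ hn, mul_comm]

theorem sqrt_div_mul_lt_iff {c x y : ℝ} (hc : 0 < c) (hn : 0 < n) :
    √(x / (n * y)) < c ↔ x / y < n * c ^ 2 :=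
  lt_iff_lt_of_le_iff_le (le_sqrt_div_mul_iff hc hn)

end SqrtIdentities

theorem integral_comp_eq_of_two_point {Ω : Type*} [MeasurableSpace Ω] {μ : Measure Ω}
    [IsProbabilityMeasure μ] {X : Ω → ℝ} (hX : Measurable X) {u v p q : ℝ} (huv : u ≠ v)
    (hp : 0 ≤ p) (hq : 0 ≤ q) (hpq : p + q = 1)
    (hXu : μ {ω | X ω = u} = ENNReal.ofReal p) (hXv : μ {ω | X ω = v} = ENNReal.ofReal q)
    (g : ℝ → ℝ) : ∫ ω, g (X ω) ∂μ = p * g u + q * g v := by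
  set A := {ω | X ω = u}
  set B := {ω | X ω = v}
  have hA : MeasurableSet A := hX (measurableSet_singleton u)
  have hB : MeasurableSet B := hX (measurableSet_singleton v)
  have hAB : Disjoint A B := Set.disjoint_left.2 fun ω hu hv => huv (hu.symm.trans hv)
  have hAB_ae : ∀ᵐ ω ∂μ, ω ∈ A ∪ B := by
    refine ae_iff.2 (measure_compl (hA.union hB) (measure_ne_top _ _) |>.trans ?_)
    rw [measure_union hAB hB, hXu, hXv, ← ENNReal.ofReal_add hp hq, hpq, ENNReal.ofReal_one,
      measure_univ, tsub_self]
  have hg : (fun ω => g (X ω)) =ᵐ[μ]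
      fun ω => A.indicator (fun _ => g u) ω + B.indicator (fun _ => g v) ω := by
    filter_upwards [hAB_ae] with ω hω
    rcases hω with hu | hv
    · simp [Set.indicator_of_mem hu, Set.indicator_of_notMem (hAB.notMem_of_mem_left hu), hu.out]
    · simp [Set.indicator_of_mem hv, Set.indicator_of_notMem (hAB.notMem_of_mem_right hv), hv.out]
  rw [integral_congr_ae hg, integral_add ((integrable_const _).indicator hA)
    ((integrable_const _).indicator hB), integral_indicator_const _ hA,
    integral_indicator_const _ hB, measureReal_def, measureReal_def, hXu, hXv,
    ENNReal.toReal_ofReal hp, ENNReal.toReal_ofReal hq, smul_eq_mul, smul_eq_mul]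

section TwoPointLaw

variable {Ω : Type*} [MeasurableSpace Ω] {μ : Measure Ω} [IsProbabilityMeasure μ] {X : Ω → ℝ}
  {p q : ℝ}

theorem mu3_two_point (hX : Measurable X) (hp : 0 < p) (hq : 0 < q) (hpq : p + q = 1)
    (hXp : μ {ω | X ω = √(q / p)} = ENNReal.ofReal p)
    (hXq : μ {ω | X ω = -√(p / q)} = ENNReal.ofReal q) {z : ℝ} (hz : √(q / p) < z) :
    mu3 μ X z = q * √(q / p) - if √(p / q) < z then p * √(p / q) else 0 := by
  rw [mu3, integral_comp_eq_of_two_point (g := fun x => if |x| < z then x ^ 3 else 0) hX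
    (sqrt_div_ne_neg_sqrt_div hp hq) hp.le hq.le hpq hXp hXq, abs_neg,
    abs_of_nonneg (sqrt_nonneg _), abs_of_nonneg (sqrt_nonneg _), if_pos hz,
    mul_sqrt_div_pow_three hp hq.le]
  split_ifs
  · rw [neg_pow, mul_left_comm, mul_sqrt_div_pow_three hq hp.le]; ring
  · ring

theorem sig2_two_point (hX : Measurable X) (hp : 0 < p) (hq : 0 < q) (hpq : p + q = 1)
    (hXp : μ {ω | X ω = √(q / p)} = ENNReal.ofReal p)
    (hXq : μ {ω | X ω = -√(p / q)} = ENNReal.ofReal q) (z : ℝ) :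
    sig2 μ X z = (if z ≤ √(q / p) then q else 0) + (if z ≤ √(p / q) then p else 0) := by
  rw [sig2, integral_comp_eq_of_two_point (g := fun x => if z ≤ |x| then x ^ 2 else 0) hX
    (sqrt_div_ne_neg_sqrt_div hp hq) hp.le hq.le hpq hXp hXq, abs_neg,
    abs_of_nonneg (sqrt_nonneg _), abs_of_nonneg (sqrt_nonneg _), mul_ite, mul_ite,
    neg_sq, mul_sq_sqrt_div hp hq.le, mul_sq_sqrt_div hq hp.le, mul_zero, mul_zero]

end TwoPointLaw

section TwoStep

variable {p q a b s Z : ℝ}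

theorem max_mul_two_step_le (hp : 0 ≤ p) (hpq : p + q = 1) (hab : a ≤ b) (hs : 0 ≤ s)
    {z : ℝ} (hz : z < Z) :
    max z s * ((if z ≤ a then q else 0) + (if z ≤ b then p else 0)) ≤
      max (max a s) (p * max (min b Z) s) := by
  by_cases hza : z ≤ a
  · rw [if_pos hza, if_pos (hza.trans hab), add_comm, hpq, mul_one]
    exact le_max_of_le_left (max_le_max_right s hza)
  by_cases hzb : z ≤ b
  · rw [if_neg hza, if_pos hzb, zero_add, mul_comm]
    exact le_max_of_le_right <|
      mul_le_mul_of_nonneg_left (max_le_max_right s (le_min hzb hz.le)) hp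
  · rw [if_neg hza, if_neg hzb, add_zero, mul_zero]
    exact le_max_of_le_left (le_max_of_le_right hs)

theorem exists_lt_max_mul_two_step (hp : 0 < p) (hq : 0 ≤ q) (hpq : p + q = 1) (ha : 0 < a)
    (hab : a ≤ b) (haZ : a < Z) (hsZ : s < Z) {w : ℝ}
    (hw : w < max (max a s) (p * max (min b Z) s)) :
    ∃ z ∈ Ioo 0 Z, w < max z s * ((if z ≤ a then q else 0) + (if z ≤ b then p else 0)) := by
  rcases lt_max_iff.1 hw with hw | hw
  · refine ⟨a, ⟨ha, haZ⟩, ?_⟩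
    rwa [if_pos le_rfl, if_pos hab, add_comm, hpq, mul_one]
  rcases lt_or_ge b Z with hbZ | hZb
  · refine ⟨b, ⟨ha.trans_le hab, hbZ⟩, hw.trans_le ?_⟩
    rw [min_eq_left hbZ.le, if_pos le_rfl, mul_comm]
    have hq' : 0 ≤ if b ≤ a then q else 0 := by split_ifs <;> simp [hq]
    exact mul_le_mul_of_nonneg_left (by linarith) ((ha.le.trans hab).trans (le_max_left b s))
  · rw [min_eq_right hZb, max_eq_left hsZ.le, ← div_lt_iff₀' hp] at hw
    obtain ⟨z, hz, hzZ⟩ := exists_between (max_lt (max_lt haZ hsZ) hw)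
    obtain ⟨⟨haz, hsz⟩, hwz⟩ := max_lt_iff.1 hz |>.imp_left max_lt_iff.1
    refine ⟨z, ⟨ha.trans haz, hzZ⟩, ?_⟩
    rw [if_neg haz.not_ge, if_pos (hzZ.le.trans hZb), zero_add, max_eq_left hsz.le,
      mul_comm]
    exact (div_lt_iff₀' hp).1 hwz

theorem sSup_image_max_mul_two_step (hp : 0 < p) (hq : 0 ≤ q) (hpq : p + q = 1)
    (ha : 0 < a) (hab : a ≤ b) (hs : 0 ≤ s) (haZ : a < Z) (hsZ : s < Z) :
    sSup ((fun z => max z s * ((if z ≤ a then q else 0) + (if z ≤ b then p else 0))) ''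
      Ioo 0 Z) = max (max a s) (p * max (min b Z) s) :=
  csSup_eq_of_forall_le_of_forall_lt_exists_gt ⟨_, mem_image_of_mem _ ⟨ha, haZ⟩⟩
    (forall_mem_image.2 fun _ hz => max_mul_two_step_le hp.le hpq hab hs hz.2)
    fun _ hw => by
      simpa only [exists_mem_image] using exists_lt_max_mul_two_step hp hq hpq ha hab haZ hsZ hw

end TwoStep

theorem max_max_mul_max_min_div {p a b s Z : ℝ} (hs : 0 < s) :
    max (max a s) (p * max (min b Z) s) / s =
      max (max (a / s) 1) (p * max (min (b / s) (Z / s)) 1) := by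
  simp only [← max_div_div_right hs.le, ← min_div_div_right hs.le, mul_div_assoc, div_self hs.ne']

theorem rozovskii_fraction_two_point {Ω : Type*} [MeasurableSpace Ω] {μ : Measure Ω}
    [IsProbabilityMeasure μ] {X : Ω → ℝ} {p q : ℝ} (hX : Measurable X) (hp : 0 < p) (hq : 0 < q)
    (hpq : p + q = 1) (hqp : q ≤ p) (hXp : μ {ω | X ω = √(q / p)} = ENNReal.ofReal p)
    (hXq : μ {ω | X ω = -√(p / q)} = ENNReal.ofReal q) {n ε : ℝ} (hn : 1 ≤ n) (hε : 1 < ε)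
    (γ : ℝ) :
    (√n)⁻¹ * (γ * |mu3 μ X (ε * √n)| +
      sSup ((fun z => max z √n * sig2 μ X z) '' Ioo 0 (ε * √n))) =
    γ * (if √(p / (n * q)) < ε then p * √(p / (n * q)) - q * √(q / (n * p))
      else q * √(q / (n * p))) + max (max √(q / (n * p)) 1) (p * max (min √(p / (n * q)) ε) 1) := by
  set s := √n
  set a := √(q / p) with ha_def
  set b := √(p / q) with hb_def
  have hs : 0 < s := one_pos.trans_le (one_le_sqrt.2 hn)
  have ha : 0 < a := sqrt_pos.2 (div_pos hq hp)
  have ha1 : a ≤ 1 := sqrt_le_one.2 ((div_le_one hp).2 hqp)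
  have hab : a ≤ b := ha1.trans (one_le_sqrt.2 ((one_le_div hq).2 hqp))
  have hsZ : s < ε * s := lt_mul_left hs hε
  have haZ : a < ε * s := (ha1.trans (one_le_sqrt.2 hn)).trans_lt hsZ
  have hα : √(q / (n * p)) = a / s := by rw [mul_comm, ← div_div, sqrt_div' _ (by linarith)]
  have hβ : √(p / (n * q)) = b / s := by rw [mul_comm, ← div_div, sqrt_div' _ (by linarith)]
  have hM := max_max_mul_max_min_div (p := p) (a := a) (b := b) (Z := ε * s) hs
  rw [mul_div_cancel_right₀ ε hs.ne'] at hM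
  simp only [sig2_two_point hX hp hq hpq hXp hXq]
  rw [mu3_two_point hX hp hq hpq hXp hXq haZ, sSup_image_max_mul_two_step hp hq.le hpq ha hab
    hs.le haZ hsZ, ← ha_def, ← hb_def, hα, hβ, ← hM]
  by_cases hb : b < ε * s
  · have hqapb : q * a ≤ p * b := mul_le_mul hqp hab ha.le hp.le
    rw [if_pos hb, if_pos ((div_lt_iff₀ hs).2 hb), abs_sub_comm, abs_of_nonneg (by linarith)]
    field_simp
  · rw [if_neg hb, if_neg (hb ∘ (div_lt_iff₀ hs).1), sub_zero, abs_of_nonneg (by positivity)]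
    field_simp

theorem rozovskii_fraction_g1_two_point_general
    {Ω : Type*} [MeasurableSpace Ω] (μ : Measure Ω) [IsProbabilityMeasure μ]
    (n : ℕ) (hn : 0 < n) (p : ℝ) (hp : p ∈ Set.Ico (1/2 : ℝ) 1) (q : ℝ) (hq : q = 1 - p)
    (X : Ω → ℝ) (hX : Measurable X)
    (hXp : μ {ω | X ω = Real.sqrt (q / p)} = ENNReal.ofReal p)
    (hXq : μ {ω | X ω = -Real.sqrt (p / q)} = ENNReal.ofReal q)
    (ε γ : ℝ) (hε : 1 < ε)
    (L : ℝ)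
    (hL : L = (Real.sqrt n)⁻¹ *
      (γ * |mu3 μ X (ε * Real.sqrt n)| +
        sSup ((fun z => max z (Real.sqrt n) * sig2 μ X z) ''
          Set.Ioo (0 : ℝ) (ε * Real.sqrt n)))) :
    ((n : ℝ) ≤ q / p → q / p < (n : ℝ) * ε ^ 2 → (n : ℝ) * ε ^ 2 ≤ p / q →
      L = γ * Real.sqrt (q ^ 3 / ((n : ℝ) * p)) +
            max (Real.sqrt (q / ((n : ℝ) * p))) (ε * p)) ∧
    ((n : ℝ) ≤ q / p → q / p ≤ p / q → p / q < (n : ℝ) * ε ^ 2 →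
      L = γ * (p - q) / Real.sqrt ((n : ℝ) * p * q) +
            max (Real.sqrt (q / ((n : ℝ) * p))) (Real.sqrt (p ^ 3 / ((n : ℝ) * q)))) ∧
    (q / p < (n : ℝ) → (n : ℝ) < (n : ℝ) * ε ^ 2 → (n : ℝ) * ε ^ 2 ≤ p / q →
      L = γ * Real.sqrt (q ^ 3 / ((n : ℝ) * p)) + max (ε * p) 1) ∧
    (q / p < (n : ℝ) → (n : ℝ) ≤ p / q → p / q < (n : ℝ) * ε ^ 2 →
      L = γ * (p - q) / Real.sqrt ((n : ℝ) * p * q) +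
            max (Real.sqrt (p ^ 3 / ((n : ℝ) * q))) 1) ∧
    (p / q < (n : ℝ) →
      L = γ * (p - q) / Real.sqrt ((n : ℝ) * p * q) + 1) := by
  obtain ⟨hp_half, hp_one⟩ := hp
  have hp0 : 0 < p := by linarith
  have hq0 : 0 < q := by linarith
  have hn1 : (1 : ℝ) ≤ n := by exact_mod_cast hn
  have hn0 : (0 : ℝ) < n := one_pos.trans_le hn1
  rw [rozovskii_fraction_two_point hX hp0 hq0 (by linarith) (by linarith) hXp hXq hn1 hε] at hL
  rw [mul_div_assoc, ← mul_sqrt_div_mul_sub hn0 hp0 hq0 (by linarith), ← mul_sqrt_div_mul hq0.le,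
    ← mul_sqrt_div_mul hp0.le]
  set α := √(q / (n * p))
  set β := √(p / (n * q))
  have hα1 : α ≤ 1 := sqrt_le_one.2 ((div_le_one (by positivity)).2 (by nlinarith))
  have one_le_iff {x y : ℝ} : 1 ≤ √(x / (n * y)) ↔ n ≤ x / y := by
    simpa using le_sqrt_div_mul_iff one_pos hn0
  have lt_one_iff {x y : ℝ} : √(x / (n * y)) < 1 ↔ x / y < n := by
    simpa using sqrt_div_mul_lt_iff one_pos hn0
  have hε0 : 0 < ε := one_pos.trans hε
  refine ⟨fun h1 _ h3 => ?_, fun h1 h2 h3 => ?_, fun h1 _ h3 => ?_, fun h1 h2 h3 => ?_,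
    fun h1 => ?_⟩
  · rw [hL, if_neg ((le_sqrt_div_mul_iff hε0 hn0).2 h3).not_gt, max_eq_left (one_le_iff.2 h1),
      min_eq_right ((le_sqrt_div_mul_iff hε0 hn0).2 h3), max_eq_left hε.le, mul_comm p]
  · rw [hL, if_pos ((sqrt_div_mul_lt_iff hε0 hn0).2 h3), max_eq_left (one_le_iff.2 h1),
      min_eq_left ((sqrt_div_mul_lt_iff hε0 hn0).2 h3).le, max_eq_left (one_le_iff.2 (h1.trans h2))]
  · rw [hL, if_neg ((le_sqrt_div_mul_iff hε0 hn0).2 h3).not_gt, max_eq_right (lt_one_iff.2 h1).le,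
      min_eq_right ((le_sqrt_div_mul_iff hε0 hn0).2 h3), max_eq_left hε.le, max_comm, mul_comm p]
  · rw [hL, if_pos ((sqrt_div_mul_lt_iff hε0 hn0).2 h3), max_eq_right (lt_one_iff.2 h1).le,
      min_eq_left ((sqrt_div_mul_lt_iff hε0 hn0).2 h3).le, max_eq_left (one_le_iff.2 h2), max_comm]
  · have hβ1 : β < 1 := lt_one_iff.2 h1
    rw [hL, if_pos (hβ1.trans hε), max_eq_right hα1, min_eq_left (hβ1.trans hε).le,
      max_eq_right hβ1.le, mul_one, max_eq_left hp_one.le]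

theorem rozovskii_fraction_g1_two_point
    {Ω : Type*} [MeasurableSpace Ω] (μ : Measure Ω) [IsProbabilityMeasure μ]
    (n : ℕ) (hn : 0 < n) (p : ℝ) (hp : p ∈ Set.Ico (1/2 : ℝ) 1) (q : ℝ) (hq : q = 1 - p)
    (X : Ω → ℝ) (hX : Measurable X)
    (hXp : μ {ω | X ω = Real.sqrt (q / p)} = ENNReal.ofReal p)
    (hXq : μ {ω | X ω = -Real.sqrt (p / q)} = ENNReal.ofReal q)
    (ε γ : ℝ) (hε : 1 < ε) (hγ : 0 < γ)
    (L : ℝ)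
    (hL : L = (Real.sqrt n)⁻¹ *
      (γ * |mu3 μ X (ε * Real.sqrt n)| +
        sSup ((fun z => max z (Real.sqrt n) * sig2 μ X z) ''
          Set.Ioo (0 : ℝ) (ε * Real.sqrt n)))) :
    ((n : ℝ) ≤ q / p → q / p < (n : ℝ) * ε ^ 2 → (n : ℝ) * ε ^ 2 ≤ p / q →
      L = γ * Real.sqrt (q ^ 3 / ((n : ℝ) * p)) +
            max (Real.sqrt (q / ((n : ℝ) * p))) (ε * p)) ∧
    ((n : ℝ) ≤ q / p → q / p ≤ p / q → p / q < (n : ℝ) * ε ^ 2 →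
      L = γ * (p - q) / Real.sqrt ((n : ℝ) * p * q) +
            max (Real.sqrt (q / ((n : ℝ) * p))) (Real.sqrt (p ^ 3 / ((n : ℝ) * q)))) ∧
    (q / p < (n : ℝ) → (n : ℝ) < (n : ℝ) * ε ^ 2 → (n : ℝ) * ε ^ 2 ≤ p / q →
      L = γ * Real.sqrt (q ^ 3 / ((n : ℝ) * p)) + max (ε * p) 1) ∧
    (q / p < (n : ℝ) → (n : ℝ) ≤ p / q → p / q < (n : ℝ) * ε ^ 2 →
      L = γ * (p - q) / Real.sqrt ((n : ℝ) * p * q) +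
            max (Real.sqrt (p ^ 3 / ((n : ℝ) * q))) 1) ∧
    (p / q < (n : ℝ) →
      L = γ * (p - q) / Real.sqrt ((n : ℝ) * p * q) + 1) :=
  rozovskii_fraction_g1_two_point_general μ n hn p hp q hq X hX hXp hXq ε γ hε L hL
end
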